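/- arXiv:math/0301151 — 4 statements merged into one kernel-verified Lean document; each statement's English description precedes it below -/
import Mathlib

section
/- Let k, l ≥ 1 and let (α_{ij})_{1≤i,j≤k} be a k-frame in M_{kl}(ℂ). Then there exists an invertible matrix g ∈ GL_{kl}(ℂ) such that α_{ij} = g·(E_{ij} ⊗ 1_l)·g⁻¹ for all 1 ≤ i,j ≤ k, where E_{ij} ⊗ 1_l is the Kronecker product of the matrix unit E_{ij} ∈ M_k(ℂ) with the identity matrix 1_l ∈ M_l(ℂ). (In other words, the group GL_{kl}(ℂ) acts transitively by conjugation on the set of k-frames in M_{kl}(ℂ).) -/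
open Matrix Kronecker

/-!
Fix `i₀`. The matrix units `α i j`, viewed as endomorphisms of `M = K^{ι × m}`, split `M` as the
direct sum of `ι` copies of the corner `V = α i₀ i₀ M`, the `i`-th copy embedded by `α i i₀`, and in
this decomposition `α i j` moves the `j`-th summand to the `i`-th one. Counting dimensions gives
`V ≃ K^m`, so the decomposition is an isomorphism `K^{ι × m} ≃ M` carrying the standard units
`E_{ij} ⊗ 1` to the `α i j`; its matrix is the conjugating `g`.
-/

structure IsMatrixUnits {A ι : Type*} [Semiring A] [Fintype ι] [DecidableEq ι]
    (e : ι → ι → A) : Prop where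
  mul_eq : ∀ i j r s, e i j * e r s = if j = r then e i s else 0
  sum_diag : ∑ i, e i i = 1

namespace IsMatrixUnits

section Semiring

variable {A ι : Type*} [Semiring A] [Fintype ι] [DecidableEq ι] {e : ι → ι → A}

theorem map {B F : Type*} [Semiring B] [FunLike F A B] [RingHomClass F A B]
    (he : IsMatrixUnits e) (f : F) : IsMatrixUnits fun i j => f (e i j) where
  mul_eq i j r s := by rw [← map_mul, he.mul_eq, apply_ite f, map_zero]
  sum_diag := by rw [← map_sum, he.sum_diag, map_one]

end Semiring

section Module

variable {R M ι : Type*} [Semiring R] [AddCommMonoid M] [Module R M] [Fintype ι]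
  [DecidableEq ι] {e : ι → ι → Module.End R M}

theorem apply_apply (he : IsMatrixUnits e) (i j r s : ι) (x : M) :
    e i j (e r s x) = if j = r then e i s x else 0 := by
  rw [← Module.End.mul_apply, he.mul_eq]
  split_ifs <;> rfl

theorem apply_mem_range (he : IsMatrixUnits e) (i j : ι) (x : M) :
    e i j x ∈ LinearMap.range (e i i) :=
  ⟨e i j x, by simp [he.apply_apply]⟩

theorem apply_eq_self_of_mem_range (he : IsMatrixUnits e) {i : ι} {v : M}
    (hv : v ∈ LinearMap.range (e i i)) : e i i v = v := by
  obtain ⟨x, rfl⟩ := hv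
  simp [he.apply_apply]

theorem sum_apply_diag (he : IsMatrixUnits e) (x : M) : ∑ i, e i i x = x := by
  rw [← LinearMap.sum_apply, he.sum_diag, Module.End.one_apply]

def piRangeEquiv (he : IsMatrixUnits e) (i₀ : ι) :
    (ι → LinearMap.range (e i₀ i₀)) ≃ₗ[R] M :=
  LinearEquiv.ofLinearMap
    (∑ i, e i i₀ ∘ₗ (LinearMap.range (e i₀ i₀)).subtype ∘ₗ LinearMap.proj i)
    (LinearMap.pi fun j => (e i₀ j).codRestrict _ (he.apply_mem_range i₀ j))
    (by
      ext x
      simp [he.apply_apply, he.sum_apply_diag])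
    (LinearMap.ext fun f => funext fun j => Subtype.ext <| by
      simp [he.apply_apply, he.apply_eq_self_of_mem_range (f j).2])

theorem piRangeEquiv_apply (he : IsMatrixUnits e) (i₀ : ι)
    (f : ι → LinearMap.range (e i₀ i₀)) :
    he.piRangeEquiv i₀ f = ∑ i, e i i₀ (f i) := by
  simp [piRangeEquiv]

theorem apply_piRangeEquiv (he : IsMatrixUnits e) (i₀ i j : ι)
    (f : ι → LinearMap.range (e i₀ i₀)) :
    e i j (he.piRangeEquiv i₀ f) = he.piRangeEquiv i₀ (Pi.single i (f j)) := by
  simp [piRangeEquiv_apply, he.apply_apply, Pi.single_apply, apply_ite]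

end Module

end IsMatrixUnits

theorem single_one_kronecker_one_mulVec {R ι m : Type*} [CommSemiring R] [Fintype ι]
    [DecidableEq ι] [Fintype m] [DecidableEq m] (i j : ι) (x : ι × m → R) :
    (single i j (1 : R) ⊗ₖ (1 : Matrix m m R)) *ᵥ x =
      Function.uncurry (Pi.single i (Function.curry x j)) := by
  ext ⟨a, c⟩
  by_cases h : a = i
  · subst h
    simp [mulVec, dotProduct, Fintype.sum_prod_type, single_apply, one_apply]
  · simp [mulVec, dotProduct, Ne.symm h, h]

theorem LinearEquiv.exists_units_forall_eq_mul_mul_inv {R n κ : Type*} [CommRing R]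
    [Fintype n] [DecidableEq n] (T : (n → R) ≃ₗ[R] n → R) {A B : κ → Matrix n n R}
    (h : ∀ i x, A i *ᵥ T x = T (B i *ᵥ x)) :
    ∃ g : (Matrix n n R)ˣ, ∀ i, A i = g * B i * ((g⁻¹ : (Matrix n n R)ˣ) : Matrix n n R) := by
  refine ⟨⟨LinearMap.toMatrix' T, LinearMap.toMatrix' T.symm, ?_, ?_⟩, fun i => ?_⟩
  · simp [← LinearMap.toMatrix'_comp]
  · simp [← LinearMap.toMatrix'_comp]
  · apply Matrix.toLin'.injective
    refine LinearMap.ext fun x => ?_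
    simpa [← LinearMap.toMatrix'_comp] using h i (T.symm x)

theorem IsMatrixUnits.exists_units_eq_conj_single_kronecker_one {K ι m : Type*} [Field K]
    [Fintype ι] [DecidableEq ι] [Nonempty ι] [Fintype m] [DecidableEq m]
    {α : ι → ι → Matrix (ι × m) (ι × m) K} (hα : IsMatrixUnits α) :
    ∃ g : (Matrix (ι × m) (ι × m) K)ˣ, ∀ i j,
      α i j = (g : Matrix (ι × m) (ι × m) K) * (single i j 1 ⊗ₖ (1 : Matrix m m K)) *
        ((g⁻¹ : (Matrix (ι × m) (ι × m) K)ˣ) : Matrix (ι × m) (ι × m) K) := by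
  have he := hα.map Matrix.toLinAlgEquiv'
  let i₀ : ι := Classical.arbitrary ι
  let V := LinearMap.range (toLinAlgEquiv' (α i₀ i₀))
  have hV : Module.finrank K V = Module.finrank K (m → K) := by
    simpa [Module.finrank_pi_fintype] using (he.piRangeEquiv i₀).finrank_eq
  let T := (LinearEquiv.curry K K ι m).trans <|
    (LinearEquiv.piCongrRight fun _ => (LinearEquiv.ofFinrankEq V (m → K) hV).symm).trans
      (he.piRangeEquiv i₀)
  have hT : ∀ i j x, α i j *ᵥ T x = T ((single i j 1 ⊗ₖ (1 : Matrix m m K)) *ᵥ x) := by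
    intro i j x
    rw [← toLinAlgEquiv'_apply, single_one_kronecker_one_mulVec]
    simp only [T, LinearEquiv.trans_apply, he.apply_piRangeEquiv]
    congr 1
    ext r : 1
    rcases eq_or_ne r i with rfl | h <;> simp [*]
  obtain ⟨g, hg⟩ := T.exists_units_forall_eq_mul_mul_inv (A := fun p : ι × ι => α p.1 p.2)
    (B := fun p => single p.1 p.2 1 ⊗ₖ 1) fun p => hT p.1 p.2
  exact ⟨g, fun i j => hg (i, j)⟩

theorem stmt_5_general (k l : ℕ) (hk : 1 ≤ k)
    (α : Fin k → Fin k → Matrix (Fin k × Fin l) (Fin k × Fin l) ℂ)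
    (hmul : ∀ i j r s : Fin k, α i j * α r s = if j = r then α i s else 0)
    (hsum : ∑ i : Fin k, α i i = 1) :
    ∃ g : (Matrix (Fin k × Fin l) (Fin k × Fin l) ℂ)ˣ,
      ∀ i j : Fin k,
        α i j = (g : Matrix (Fin k × Fin l) (Fin k × Fin l) ℂ) *
            (Matrix.single i j 1 ⊗ₖ (1 : Matrix (Fin l) (Fin l) ℂ)) *
            ((g⁻¹ : (Matrix (Fin k × Fin l) (Fin k × Fin l) ℂ)ˣ) :
              Matrix (Fin k × Fin l) (Fin k × Fin l) ℂ) := by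
  have : Nonempty (Fin k) := ⟨⟨0, hk⟩⟩
  exact IsMatrixUnits.exists_units_eq_conj_single_kronecker_one ⟨hmul, hsum⟩

/-- `GL_{kl}(ℂ)` acts transitively by conjugation on k-frames in `M_{kl}(ℂ)`: any k-frame
`(α i j)` is conjugate to the standard k-frame `(E_{ij} ⊗ 1_l)` of Kronecker products of
matrix units with the identity. Here `M_{kl}(ℂ)` is realized with index type
`Fin k × Fin l`. -/
theorem stmt_5 (k l : ℕ) (hk : 1 ≤ k) (hl : 1 ≤ l)
    (α : Fin k → Fin k → Matrix (Fin k × Fin l) (Fin k × Fin l) ℂ)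
    (hli : LinearIndependent ℂ (fun p : Fin k × Fin k => α p.1 p.2))
    (hmul : ∀ i j r s : Fin k, α i j * α r s = if j = r then α i s else 0)
    (hsum : ∑ i : Fin k, α i i = 1) :
    ∃ g : (Matrix (Fin k × Fin l) (Fin k × Fin l) ℂ)ˣ,
      ∀ i j : Fin k,
        α i j = (g : Matrix (Fin k × Fin l) (Fin k × Fin l) ℂ) *
            (Matrix.single i j 1 ⊗ₖ (1 : Matrix (Fin l) (Fin l) ℂ)) *
            ((g⁻¹ : (Matrix (Fin k × Fin l) (Fin k × Fin l) ℂ)ˣ) :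
              Matrix (Fin k × Fin l) (Fin k × Fin l) ℂ) :=
  stmt_5_general k l hk α hmul hsum
end

section
/- Let k, l ≥ 1 be integers and d = gcd(k,l). There is a unique additive group homomorphism φ : (ℤ/kℤ) × (ℤ/lℤ) → ℤ/klℤ sending (1 mod k, 0) to (l mod kl) and (0, 1 mod l) to (k mod kl) (i.e. induced by (a, b) ↦ l·a + k·b). The kernel of φ is isomorphic as an additive group to ℤ/dℤ, and the quotient of ℤ/klℤ by the range of φ is isomorphic to ℤ/dℤ. (This computes π₂(Gr_{k,l}) ≅ ℤ/dℤ and π₁(Gr_{k,l}) ≅ ℤ/dℤ.) -/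
/-- Any `φ` with the prescribed values is given by the explicit formula. -/
lemma phi_formula {k l : ℕ} [NeZero k] [NeZero l] (φ : ZMod k × ZMod l →+ ZMod (k * l))
    (h1 : φ (1, 0) = (l : ZMod (k * l))) (h2 : φ (0, 1) = (k : ZMod (k * l)))
    (a : ZMod k) (b : ZMod l) :
    φ (a, b) = a.val • (l : ZMod (k * l)) + b.val • (k : ZMod (k * l)) := by
  have ha : ((a.val : ℕ) : ZMod k) = a := ZMod.natCast_rightInverse a
  have hb : ((b.val : ℕ) : ZMod l) = b := ZMod.natCast_rightInverse b
  have hab : (a, b) = a.val • ((1 : ZMod k), (0 : ZMod l)) +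
      b.val • ((0 : ZMod k), (1 : ZMod l)) := by
    ext
    · simp [nsmul_eq_mul, ha]
    · simp [nsmul_eq_mul, hb]
  rw [hab, map_add, map_nsmul, map_nsmul, h1, h2]

/-- There is a unique additive homomorphism `φ : ℤ/k × ℤ/l → ℤ/kl` with
`φ(1,0) = l` and `φ(0,1) = k` (induced by `(a,b) ↦ l·a + k·b`); its kernel is isomorphic
to `ℤ/dℤ` and the quotient of `ℤ/klℤ` by its range is isomorphic to `ℤ/dℤ`, where
`d = gcd(k,l)`. -/
theorem stmt_11 (k l : ℕ) (hk : 1 ≤ k) (hl : 1 ≤ l) (d : ℕ) (hd : d = Nat.gcd k l) :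
    (∃! φ : ZMod k × ZMod l →+ ZMod (k * l),
        φ (1, 0) = (l : ZMod (k * l)) ∧ φ (0, 1) = (k : ZMod (k * l))) ∧
    ∀ φ : ZMod k × ZMod l →+ ZMod (k * l),
      φ (1, 0) = (l : ZMod (k * l)) → φ (0, 1) = (k : ZMod (k * l)) →
        Nonempty (φ.ker ≃+ ZMod d) ∧
        Nonempty ((ZMod (k * l) ⧸ φ.range) ≃+ ZMod d) := by
  have hk0 : k ≠ 0 := by omega
  have hl0 : l ≠ 0 := by omega
  haveI : NeZero k := ⟨hk0⟩
  haveI : NeZero l := ⟨hl0⟩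
  have hkl0 : k * l ≠ 0 := by positivity
  haveI : NeZero (k * l) := ⟨hkl0⟩
  have hdk : d ∣ k := hd ▸ Nat.gcd_dvd_left k l
  have hdl : d ∣ l := hd ▸ Nat.gcd_dvd_right k l
  have hd0 : d ≠ 0 := by rw [hd]; exact Nat.gcd_ne_zero_left hk0
  haveI : NeZero d := ⟨hd0⟩
  have hdkl : d ∣ k * l := hdk.trans ⟨l, rfl⟩
  -- existence of φ₀
  obtain ⟨φ0, hv1, hv2⟩ : ∃ φ0 : ZMod k × ZMod l →+ ZMod (k * l),
      φ0 (1, 0) = (l : ZMod (k * l)) ∧ φ0 (0, 1) = (k : ZMod (k * l)) := by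
    have hfk : (k : ℤ) • (l : ZMod (k * l)) = 0 := by
      rw [natCast_zsmul, nsmul_eq_mul, ← Nat.cast_mul, ZMod.natCast_self]
    have hfl : (l : ℤ) • (k : ZMod (k * l)) = 0 := by
      rw [natCast_zsmul, nsmul_eq_mul, ← Nat.cast_mul, mul_comm, ZMod.natCast_self]
    refine ⟨AddMonoidHom.coprod
      (ZMod.lift k ⟨zmultiplesHom _ (l : ZMod (k * l)), hfk⟩)
      (ZMod.lift l ⟨zmultiplesHom _ (k : ZMod (k * l)), hfl⟩), ?_, ?_⟩
    · rw [AddMonoidHom.coprod_apply, map_zero, add_zero,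
        show (1 : ZMod k) = ((1 : ℤ) : ZMod k) by norm_cast, ZMod.lift_coe]
      simp
    · rw [AddMonoidHom.coprod_apply, map_zero, zero_add,
        show (1 : ZMod l) = ((1 : ℤ) : ZMod l) by norm_cast, ZMod.lift_coe]
      simp
  constructor
  · refine ⟨φ0, ⟨hv1, hv2⟩, ?_⟩
    rintro ψ ⟨h1, h2⟩
    apply AddMonoidHom.ext
    rintro ⟨a, b⟩
    rw [phi_formula ψ h1 h2, phi_formula φ0 hv1 hv2]
  · intro φ h1 h2
    -- range of φ is the cyclic subgroup generated by d
    have hlmem : (l : ZMod (k * l)) ∈ φ.range := ⟨(1, 0), h1⟩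
    have hkmem : (k : ZMod (k * l)) ∈ φ.range := ⟨(0, 1), h2⟩
    have hdmem : (d : ZMod (k * l)) ∈ φ.range := by
      have hbez : (d : ℤ) = k * Nat.gcdA k l + l * Nat.gcdB k l := by
        rw [hd]; exact Nat.gcd_eq_gcd_ab k l
      have heq : ((d : ℕ) : ZMod (k * l)) =
          (Nat.gcdA k l) • (k : ZMod (k * l)) + (Nat.gcdB k l) • (l : ZMod (k * l)) := by
        rw [show ((d : ℕ) : ZMod (k * l)) = ((d : ℤ) : ZMod (k * l)) by push_cast; rfl, hbez]
        push_cast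
        rw [zsmul_eq_mul, zsmul_eq_mul]
        ring
      rw [heq]
      exact AddSubgroup.add_mem _ (AddSubgroup.zsmul_mem _ hkmem _)
        (AddSubgroup.zsmul_mem _ hlmem _)
    have hrange : φ.range = AddSubgroup.zmultiples ((d : ZMod (k * l))) := by
      apply le_antisymm
      · rintro x ⟨⟨a, b⟩, rfl⟩
        rw [phi_formula φ h1 h2]
        have hlz : (l : ZMod (k * l)) ∈ AddSubgroup.zmultiples ((d : ZMod (k * l))) := by
          obtain ⟨c, hc⟩ := hdl
          have : (l : ZMod (k * l)) = c • (d : ZMod (k * l)) := by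
            rw [nsmul_eq_mul, ← Nat.cast_mul, Nat.mul_comm c d, ← hc]
          rw [this]
          exact AddSubgroup.nsmul_mem _ (AddSubgroup.mem_zmultiples _) _
        have hkz : (k : ZMod (k * l)) ∈ AddSubgroup.zmultiples ((d : ZMod (k * l))) := by
          obtain ⟨c, hc⟩ := hdk
          have : (k : ZMod (k * l)) = c • (d : ZMod (k * l)) := by
            rw [nsmul_eq_mul, ← Nat.cast_mul, Nat.mul_comm c d, ← hc]
          rw [this]
          exact AddSubgroup.nsmul_mem _ (AddSubgroup.mem_zmultiples _) _
        exact AddSubgroup.add_mem _ (AddSubgroup.nsmul_mem _ hlz _)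
          (AddSubgroup.nsmul_mem _ hkz _)
      · exact AddSubgroup.zmultiples_le.mpr hdmem
    have hgcd : Nat.gcd (k * l) d = d := Nat.gcd_eq_right hdkl
    have hcard_zmul : Nat.card (AddSubgroup.zmultiples ((d : ZMod (k * l)))) = k * l / d := by
      rw [Nat.card_zmultiples, ZMod.addOrderOf_coe d hkl0, hgcd]
    have hcard_range : Nat.card φ.range = k * l / d := by rw [hrange, hcard_zmul]
    have hcard_dom : Nat.card (ZMod k × ZMod l) = k * l := by
      simp [Nat.card_prod, Nat.card_zmod]
    have hcard_ker : Nat.card φ.ker = d := by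
      have h := AddSubgroup.card_eq_card_quotient_mul_card_addSubgroup φ.ker
      rw [hcard_dom, Nat.card_congr (QuotientAddGroup.quotientKerEquivRange φ).toEquiv,
        hcard_range] at h
      have hdvd : k * l / d * d = k * l := Nat.div_mul_cancel hdkl
      have hpos : 0 < k * l / d := Nat.div_pos (Nat.le_of_dvd (by positivity) hdkl)
        (Nat.pos_of_ne_zero hd0)
      nth_rewrite 1 [← hdvd] at h
      exact (Nat.eq_of_mul_eq_mul_left hpos h.symm)
    -- the generator of the kernel
    set g : ZMod k × ZMod l := (((k / d : ℕ) : ZMod k), -((l / d : ℕ) : ZMod l)) with hg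
    have horder : addOrderOf g = d := by
      have h1' : addOrderOf (((k / d : ℕ) : ZMod k)) = d := by
        rw [ZMod.addOrderOf_coe _ hk0, Nat.gcd_eq_right (Nat.div_dvd_of_dvd hdk),
          Nat.div_div_self hdk hk0]
      have h2' : addOrderOf (-((l / d : ℕ) : ZMod l)) = d := by
        rw [addOrderOf_neg, ZMod.addOrderOf_coe _ hl0,
          Nat.gcd_eq_right (Nat.div_dvd_of_dvd hdl), Nat.div_div_self hdl hl0]
      rw [hg, Prod.addOrderOf, h1', h2', Nat.lcm_self]
    have hgker : g ∈ φ.ker := by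
      have hg_eq : g = (k / d) • ((1 : ZMod k), (0 : ZMod l)) -
          (l / d) • ((0 : ZMod k), (1 : ZMod l)) := by
        ext
        · simp [hg, nsmul_eq_mul]
        · simp [hg, nsmul_eq_mul]
      rw [AddMonoidHom.mem_ker, hg_eq, map_sub, map_nsmul, map_nsmul, h1, h2]
      have e1 : (k / d) • (l : ZMod (k * l)) = ((k / d * l : ℕ) : ZMod (k * l)) := by
        rw [nsmul_eq_mul, Nat.cast_mul]
      have e2 : (l / d) • (k : ZMod (k * l)) = ((l / d * k : ℕ) : ZMod (k * l)) := by
        rw [nsmul_eq_mul, Nat.cast_mul]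
      rw [e1, e2, sub_eq_zero]
      congr 1
      obtain ⟨k', hk'⟩ := hdk
      obtain ⟨l', hl'⟩ := hdl
      subst hk' hl'
      rw [Nat.mul_div_cancel_left _ (Nat.pos_of_ne_zero hd0),
        Nat.mul_div_cancel_left _ (Nat.pos_of_ne_zero hd0)]
      ring
    -- the homomorphism ZMod d →+ domain with image the kernel
    have hdg : (d : ℤ) • g = 0 := by
      rw [natCast_zsmul, ← horder]
      exact addOrderOf_nsmul_eq_zero g
    set ψ : ZMod d →+ ZMod k × ZMod l := ZMod.lift d ⟨zmultiplesHom _ g, hdg⟩ with hψ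
    have hψ_int : ∀ n : ℤ, ψ ((n : ℤ) : ZMod d) = n • g := fun n => ZMod.lift_coe _ _ n
    have hinj : Function.Injective ψ := by
      rw [injective_iff_map_eq_zero]
      intro x hx
      obtain ⟨n, rfl⟩ := ZMod.intCast_surjective x
      rw [hψ_int n] at hx
      have hdvd : ((d : ℕ) : ℤ) ∣ n := by
        rw [← horder]
        exact addOrderOf_dvd_iff_zsmul_eq_zero.mpr hx
      exact (ZMod.intCast_zmod_eq_zero_iff_dvd n d).mpr hdvd
    have hle : ψ.range ≤ φ.ker := by
      rintro x ⟨y, rfl⟩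
      obtain ⟨n, rfl⟩ := ZMod.intCast_surjective y
      rw [hψ_int n]
      exact AddSubgroup.zsmul_mem _ hgker n
    have hcard_psirange : Nat.card ψ.range = d := by
      rw [Nat.card_congr (AddMonoidHom.ofInjective hinj).toEquiv.symm, Nat.card_zmod]
    have hkereq : ψ.range = φ.ker :=
      AddSubgroup.eq_of_le_of_card_ge hle (by rw [hcard_psirange, hcard_ker])
    refine ⟨⟨((AddMonoidHom.ofInjective hinj).trans
      (AddEquiv.addSubgroupCongr hkereq)).symm⟩, ?_⟩
    -- quotient part
    set c : ZMod (k * l) →+ ZMod d := (ZMod.castHom hdkl (ZMod d)).toAddMonoidHom with hc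
    have hsurj : Function.Surjective c := by
      intro x
      obtain ⟨m, rfl⟩ := ZMod.intCast_surjective x
      exact ⟨((m : ℤ) : ZMod (k * l)), map_intCast (ZMod.castHom hdkl (ZMod d)) m⟩
    have hcard_kerc : Nat.card c.ker = k * l / d := by
      have h := AddSubgroup.card_eq_card_quotient_mul_card_addSubgroup c.ker
      rw [Nat.card_zmod,
        Nat.card_congr (QuotientAddGroup.quotientKerEquivOfSurjective c hsurj).toEquiv,
        Nat.card_zmod] at h
      have h' : k * l = Nat.card c.ker * d := h.trans (Nat.mul_comm _ _)
      exact (Nat.div_eq_of_eq_mul_left (Nat.pos_of_ne_zero hd0) h').symm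
    have hkerc : AddSubgroup.zmultiples ((d : ZMod (k * l))) = c.ker := by
      apply AddSubgroup.eq_of_le_of_card_ge
      · rw [AddSubgroup.zmultiples_le, AddMonoidHom.mem_ker]
        show (ZMod.castHom hdkl (ZMod d)) ((d : ZMod (k * l))) = 0
        rw [map_natCast, ZMod.natCast_self]
      · rw [hcard_kerc, hcard_zmul]
    exact ⟨(QuotientAddGroup.quotientAddEquivOfEq (hrange.trans hkerc)).trans
      (QuotientAddGroup.quotientKerEquivOfSurjective c hsurj)⟩
end

section
/- Let k, l, m, n be positive integers with k ∣ m and l ∣ n, and set d = gcd(k,l), e = gcd(m,n). Then d divides e; the linear map ℤ × ℤ → ℤ × ℤ, (α, β) ↦ ((m/k)·α, (n/l)·β), carries the kernel of (α, β) ↦ l·α + k·β into the kernel of (λ, μ) ↦ n·λ + m·μ; and it sends the generator (k/d, −l/d) of the first kernel to (e/d)·(m/e, −n/e), i.e. to e/d times the generator of the second kernel. (Hence the induced homomorphism ℤ ≅ π_{2r}(Gr_{k,l}) → π_{2r}(Gr_{m,n}) ≅ ℤ is multiplication by gcd(m,n)/gcd(k,l).) -/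
lemma aux (m d k : ℕ) (hdk : d ∣ k) (hkm : k ∣ m) (hk : 0 < k) (hd : 0 < d) :
    m / k * (k / d) = m / d := by
  rw [Nat.div_mul_div_comm hkm hdk, mul_comm m k, Nat.mul_div_mul_left _ _ hk]

/-- For `k ∣ m`, `l ∣ n`, with `d = gcd(k,l)`, `e = gcd(m,n)`: `d ∣ e`; the map
`(α, β) ↦ ((m/k)·α, (n/l)·β)` carries the kernel of `(α,β) ↦ l·α + k·β` into the kernel
of `(λ,μ) ↦ n·λ + m·μ`; and it sends the generator `(k/d, −l/d)` of the first kernel to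
`e/d` times the generator `(m/e, −n/e)` of the second. -/
theorem stmt_12 (k l m n : ℕ) (hk : 0 < k) (hl : 0 < l) (hm : 0 < m) (hn : 0 < n)
    (hkm : k ∣ m) (hln : l ∣ n) (d e : ℕ) (hd : d = Nat.gcd k l) (he : e = Nat.gcd m n) :
    d ∣ e ∧
    (∀ α β : ℤ, (l : ℤ) * α + (k : ℤ) * β = 0 →
      (n : ℤ) * (((m / k : ℕ) : ℤ) * α) + (m : ℤ) * (((n / l : ℕ) : ℤ) * β) = 0) ∧
    ((((m / k : ℕ) : ℤ) * ((k / d : ℕ) : ℤ), ((n / l : ℕ) : ℤ) * (-((l / d : ℕ) : ℤ)))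
        : ℤ × ℤ) =
      ((e / d : ℕ) : ℤ) • ((((m / e : ℕ) : ℤ), -((n / e : ℕ) : ℤ)) : ℤ × ℤ) := by
  have hdk : d ∣ k := hd ▸ Nat.gcd_dvd_left k l
  have hdl : d ∣ l := hd ▸ Nat.gcd_dvd_right k l
  have hem : e ∣ m := he ▸ Nat.gcd_dvd_left m n
  have hen : e ∣ n := he ▸ Nat.gcd_dvd_right m n
  have hde : d ∣ e := he ▸ Nat.dvd_gcd (hd ▸ (Nat.gcd_dvd_left k l).trans hkm)
    (hd ▸ (Nat.gcd_dvd_right k l).trans hln)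
  have hdpos : 0 < d := hd ▸ Nat.gcd_pos_of_pos_left l hk
  have hepos : 0 < e := he ▸ Nat.gcd_pos_of_pos_left n hm
  refine ⟨hde, ?_, ?_⟩
  · intro α β h
    obtain ⟨a, ha⟩ := hkm
    obtain ⟨b, hb⟩ := hln
    subst ha hb
    rw [Nat.mul_div_cancel_left _ hk, Nat.mul_div_cancel_left _ hl]
    push_cast
    linear_combination (a * b : ℤ) * h
  · have h1 : m / k * (k / d) = e / d * (m / e) := by
      rw [aux m d k hdk hkm hk hdpos, mul_comm (e/d), aux m d e hde hem hepos hdpos]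
    have h2 : n / l * (l / d) = e / d * (n / e) := by
      rw [aux n d l hdl hln hl hdpos, mul_comm (e/d), aux n d e hde hen hepos hdpos]
    simp only [Prod.ext_iff, Prod.smul_fst, Prod.smul_snd, smul_eq_mul]
    constructor
    · exact_mod_cast congrArg (Nat.cast : ℕ → ℤ) h1
    · have := congrArg (Nat.cast : ℕ → ℤ) h2
      push_cast at this ⊢
      linarith
end

section
/- Let k, l, m, n be positive integers with k ∣ m and l ∣ n, and set d = gcd(k,l), e = gcd(m,n) and c = (m/k)·(n/l). Then e divides c·d, so that multiplication by c induces a well-defined additive group homomorphism ℤ/dℤ → ℤ/eℤ, x mod d ↦ c·x mod e; the range of this homomorphism is the cyclic subgroup of ℤ/eℤ generated by (c mod e), and its order equals the additive order of (c mod e) in ℤ/eℤ. (This describes the induced map π_{2r−1}(Gr_{k,l}) → π_{2r−1}(Gr_{m,n}) on odd stable homotopy groups.) -/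
/-- For `k ∣ m`, `l ∣ n`, `d = gcd(k,l)`, `e = gcd(m,n)`, `c = (m/k)·(n/l)`: `e ∣ c·d`,
so multiplication by `c` gives a well-defined additive homomorphism `ℤ/dℤ → ℤ/eℤ`
(and it is the unique one sending `x mod d` to `c·x mod e`); its range is the cyclic
subgroup of `ℤ/eℤ` generated by `c mod e`, whose order is the additive order of
`c mod e`. -/
theorem stmt_13 (k l m n : ℕ) (hk : 0 < k) (hl : 0 < l) (hm : 0 < m) (hn : 0 < n)
    (hkm : k ∣ m) (hln : l ∣ n) (d e c : ℕ) (hd : d = Nat.gcd k l) (he : e = Nat.gcd m n)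
    (hc : c = (m / k) * (n / l)) :
    e ∣ c * d ∧
    ∃ φ : ZMod d →+ ZMod e,
      (∀ x : ℤ, φ ((x : ZMod d)) = (((c : ℤ) * x : ℤ) : ZMod e)) ∧
      (∀ ψ : ZMod d →+ ZMod e,
        (∀ x : ℤ, ψ ((x : ZMod d)) = (((c : ℤ) * x : ℤ) : ZMod e)) → ψ = φ) ∧
      φ.range = AddSubgroup.zmultiples ((c : ZMod e)) ∧
      Nat.card φ.range = addOrderOf ((c : ZMod e)) := by
  have hecd : e ∣ c * d := by
    have h1 : c * k = m * (n / l) := by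
      rw [hc]; rw [mul_right_comm, Nat.div_mul_cancel hkm]
    have h2 : c * l = n * (m / k) := by
      rw [hc]; rw [mul_assoc, Nat.div_mul_cancel hln, mul_comm]
    have : c * d = Nat.gcd (c * k) (c * l) := by rw [hd, Nat.gcd_mul_left]
    rw [this, h1, h2]
    exact Nat.dvd_gcd (Dvd.dvd.mul_right (he ▸ Nat.gcd_dvd_left m n) _)
      (Dvd.dvd.mul_right (he ▸ Nat.gcd_dvd_right m n) _)
  refine ⟨hecd, ?_⟩
  have hadd : ∀ a b : ℤ, (((c : ℤ) * (a + b) : ℤ) : ZMod e)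
      = ((c : ℤ) * a : ℤ) + ((c : ℤ) * b : ℤ) := by
    intro a b; push_cast; ring
  set f : ℤ →+ ZMod e := AddMonoidHom.mk' (fun x => (((c : ℤ) * x : ℤ) : ZMod e)) hadd with hf
  have hfd : f (d : ℤ) = 0 := by
    simp only [hf, AddMonoidHom.mk'_apply]
    rw [ZMod.intCast_zmod_eq_zero_iff_dvd]
    exact_mod_cast hecd
  set φ : ZMod d →+ ZMod e := ZMod.lift d ⟨f, hfd⟩ with hφ
  have hspec : ∀ x : ℤ, φ ((x : ZMod d)) = (((c : ℤ) * x : ℤ) : ZMod e) := by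
    intro x
    exact ZMod.lift_coe d ⟨f, hfd⟩ x
  have hrange : φ.range = AddSubgroup.zmultiples ((c : ZMod e)) := by
    ext y
    simp only [AddMonoidHom.mem_range, AddSubgroup.mem_zmultiples_iff]
    constructor
    · rintro ⟨z, rfl⟩
      obtain ⟨x, rfl⟩ := ZMod.intCast_surjective z
      exact ⟨x, by rw [hspec, zsmul_eq_mul]; push_cast; ring⟩
    · rintro ⟨x, rfl⟩
      exact ⟨(x : ZMod d), by rw [hspec, zsmul_eq_mul]; push_cast; ring⟩
  refine ⟨φ, hspec, ?_, hrange, by rw [hrange, Nat.card_zmultiples]⟩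
  intro ψ hψ
  ext z
  obtain ⟨x, rfl⟩ := ZMod.intCast_surjective z
  rw [hψ, hspec]
end
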